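/- In an effect algebra E, suppose x is sharp and for every t ≤ x the join t ∨ x' exists. Then for any u, s ∈ E with u ≤ x, s ≤ x, and u ⊥ s, one has s ≤ (u ⊕ x')' and hence u ⊕ s ≤ x; consequently x is principal. -/
import Mathlib


/-- An effect algebra: a set with a partially defined binary operation `oplus`
(modeled by `Option`), elements `zero` and `one`, satisfying commutativity,
associativity, unique orthosupplementation (`compl`) and the zero-unit law. -/
structure EffectAlgebra (E : Type*) where
  oplus : E → E → Option E
  zero : E
  one : E
  comm : ∀ p q, oplus p q = oplus q p
  assoc : ∀ p q r s t, oplus q r = some s → oplus p s = some t →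
    ∃ u, oplus p q = some u ∧ oplus u r = some t
  compl : E → E
  compl_def : ∀ p, oplus p (compl p) = some one
  compl_unique : ∀ p q, oplus p q = some one → q = compl p
  zero_unit : ∀ p, (oplus one p).isSome → p = zero

namespace EffectAlgebra

variable {E : Type*} (A : EffectAlgebra E)

/-- `p ≤ q` iff there is `r` with `p ⊕ r = q`. -/
def le (p q : E) : Prop := ∃ r, A.oplus p r = some q

/-- `p ⊥ q` iff `p ⊕ q` is defined. -/
def Orth (p q : E) : Prop := (A.oplus p q).isSome

/-- `j` is the join (least upper bound) of `p` and `q`. -/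
def IsJoin (p q j : E) : Prop :=
  A.le p j ∧ A.le q j ∧ ∀ u, A.le p u → A.le q u → A.le j u

/-- `m` is the meet (greatest lower bound) of `p` and `q`. -/
def IsMeet (p q m : E) : Prop :=
  A.le m p ∧ A.le m q ∧ ∀ t, A.le t p → A.le t q → A.le t m

/-- `x` is sharp iff `x ∧ x' = 0`. -/
def Sharp (x : E) : Prop := A.IsMeet x (A.compl x) A.zero

/-- `x` is principal iff `p ⊥ q`, `p ≤ x`, `q ≤ x` imply `p ⊕ q ≤ x`. -/
def Principal (x : E) : Prop :=
  ∀ p q r, A.oplus p q = some r → A.le p x → A.le q x → A.le r x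

end EffectAlgebra

namespace EffectAlgebra

variable {E : Type*} (A : EffectAlgebra E)

lemma my_compl_compl (p : E) : A.compl (A.compl p) = p :=
  (A.compl_unique (A.compl p) p (by rw [A.comm]; exact A.compl_def p)).symm

lemma my_compl_one : A.compl A.one = A.zero :=
  A.zero_unit _ (by rw [A.compl_def]; rfl)

lemma my_one_zero : A.oplus A.one A.zero = some A.one := by
  have h := A.compl_def A.one; rwa [A.my_compl_one] at h

lemma my_zero_oplus (p : E) : A.oplus A.zero p = some p := by
  have h1 : A.oplus p (A.compl p) = some A.one := A.compl_def p
  have h2 : A.oplus A.zero A.one = some A.one := by rw [A.comm]; exact A.my_one_zero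
  obtain ⟨u, hu1, hu2⟩ := A.assoc A.zero p (A.compl p) A.one A.one h1 h2
  have : u = A.compl (A.compl p) := A.compl_unique _ _ (by rw [A.comm]; exact hu2)
  rw [A.my_compl_compl] at this
  rw [this] at hu1; exact hu1

lemma my_oplus_zero (p : E) : A.oplus p A.zero = some p := by
  rw [A.comm]; exact A.my_zero_oplus p

lemma my_compl_zero : A.compl A.zero = A.one :=
  (A.compl_unique A.zero A.one (A.my_zero_oplus A.one)).symm

/-- From `a ⊕ c = b` deduce `b' ⊕ c = a'`. -/
lemma my_rev {a c b : E} (h : A.oplus a c = some b) :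
    A.oplus (A.compl b) c = some (A.compl a) := by
  obtain ⟨u, hu1, hu2⟩ := A.assoc (A.compl b) c a b A.one
    (by rw [A.comm]; exact h) (by rw [A.comm]; exact A.compl_def b)
  have : u = A.compl a := A.compl_unique _ _ (by rw [A.comm]; exact hu2)
  rw [this] at hu1; exact hu1

lemma my_cancel {a b c v : E} (h1 : A.oplus a b = some v)
    (h2 : A.oplus a c = some v) : b = c := by
  have r1 := A.my_rev h1
  have r2 := A.my_rev h2
  obtain ⟨u, hu1, hu2⟩ := A.assoc a (A.compl v) b (A.compl a) A.one r1 (A.compl_def a)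
  obtain ⟨u', hu1', hu2'⟩ := A.assoc a (A.compl v) c (A.compl a) A.one r2 (A.compl_def a)
  rw [hu1] at hu1'
  have huu : u = u' := by injection hu1'
  have hb := A.compl_unique _ _ hu2
  have hc := A.compl_unique _ _ hu2'
  rw [hb, hc, huu]

/-- right associativity -/
lemma my_assoc' {a d b e c : E} (h1 : A.oplus a d = some b)
    (h2 : A.oplus b e = some c) :
    ∃ f, A.oplus d e = some f ∧ A.oplus a f = some c := by
  obtain ⟨u, hu1, hu2⟩ := A.assoc e d a b c (by rw [A.comm]; exact h1)
    (by rw [A.comm]; exact h2)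
  exact ⟨u, by rw [A.comm]; exact hu1, by rw [A.comm]; exact hu2⟩

lemma my_le_trans {a b c : E} (h1 : A.le a b) (h2 : A.le b c) : A.le a c := by
  obtain ⟨d, hd⟩ := h1; obtain ⟨e, he⟩ := h2
  obtain ⟨f, _, hf2⟩ := A.my_assoc' hd he
  exact ⟨f, hf2⟩

lemma my_le_zero {t : E} (h : A.le t A.zero) : t = A.zero := by
  obtain ⟨c, hc⟩ := h
  have h1 := A.my_rev hc
  rw [A.my_compl_zero] at h1
  have hc0 : c = A.zero := A.zero_unit c (by rw [h1]; rfl)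
  rw [hc0, A.my_oplus_zero] at hc
  injection hc

/-- from `a ⊕ b = c`, `a ≤ b'`. -/
lemma my_le_compl {a b c : E} (h : A.oplus a b = some c) : A.le a (A.compl b) :=
  ⟨A.compl c, by rw [A.comm]; exact A.my_rev (by rw [A.comm]; exact h)⟩

/-- from `a ≤ b'`, `a ⊥ b`. -/
lemma my_orth_of_le_compl {a b : E} (h : A.le a (A.compl b)) :
    ∃ u, A.oplus a b = some u := by
  obtain ⟨e, he⟩ := h
  obtain ⟨u, hu1, _⟩ := A.assoc b a e (A.compl b) A.one he (A.compl_def b)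
  exact ⟨u, by rw [A.comm]; exact hu1⟩

lemma my_le_rev {a b : E} (h : A.le a b) : A.le (A.compl b) (A.compl a) := by
  obtain ⟨c, hc⟩ := h; exact ⟨c, A.my_rev hc⟩

end EffectAlgebra

/-- If `x` is sharp and every `t ≤ x` has a join with `x'`, then for
`u, s ≤ x` with `u ⊥ s` one has `s ≤ (u ⊕ x')'` and `u ⊕ s ≤ x`; hence `x`
is principal. -/
theorem stmt_16 {E : Type*} (A : EffectAlgebra E) (x : E)
    (hx : A.Sharp x) (hjoin : ∀ t, A.le t x → ∃ j, A.IsJoin t (A.compl x) j) :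
    (∀ u s r w, A.le u x → A.le s x → A.oplus u s = some r →
      A.oplus u (A.compl x) = some w → A.le s (A.compl w) ∧ A.le r x) ∧
    A.Principal x := by
  have main : ∀ u s r w, A.le u x → A.le s x → A.oplus u s = some r →
      A.oplus u (A.compl x) = some w → A.le s (A.compl w) ∧ A.le r x := by
    intro u s r w hu hs hr hw
    obtain ⟨hju, hjx, hjmin⟩ := (hjoin u hu).choose_spec
    set j := (hjoin u hu).choose with hj
    -- j ≤ w
    have hjw : A.le j w := hjmin w ⟨A.compl x, hw⟩ ⟨u, by rw [A.comm]; exact hw⟩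
    obtain ⟨m, hm⟩ := hjw
    obtain ⟨a, ha⟩ := hju
    obtain ⟨b, hb⟩ := hjx
    -- m ≤ x'
    obtain ⟨f, hf1, hf2⟩ := A.my_assoc' ha hm
    have hfx : f = A.compl x := A.my_cancel hf2 hw
    have hmx' : A.le m (A.compl x) := ⟨a, by rw [A.comm, ← hfx]; exact hf1⟩
    -- m ≤ u
    obtain ⟨g, hg1, hg2⟩ := A.my_assoc' hb hm
    have hgu : g = u := A.my_cancel hg2 (by rw [A.comm]; exact hw)
    have hmu : A.le m u := ⟨b, by rw [A.comm, ← hgu]; exact hg1⟩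
    -- m = 0, hence w = j
    have hm0 : m = A.zero := A.my_le_zero (hx.2.2 m (A.my_le_trans hmu hu) hmx')
    rw [hm0, A.my_oplus_zero] at hm
    have hwj : w = j := by injection hm with h; exact h.symm
    -- s ≤ w'
    have hsu' : A.le s (A.compl u) := A.my_le_compl (by rw [A.comm]; exact hr)
    have hus' : A.le u (A.compl s) := by
      have := A.my_le_rev hsu'; rwa [A.my_compl_compl] at this
    have hxs' : A.le (A.compl x) (A.compl s) := A.my_le_rev hs
    have hjs' : A.le j (A.compl s) := hjmin _ hus' hxs'
    have hsw' : A.le s (A.compl w) := by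
      have := A.my_le_rev hjs'
      rw [A.my_compl_compl] at this
      rwa [hwj]
    refine ⟨hsw', ?_⟩
    -- r ≤ x
    obtain ⟨e, he⟩ := hsw'
    obtain ⟨v, hv1, hv2⟩ := A.assoc w s e (A.compl w) A.one he (A.compl_def w)
    obtain ⟨v2, hv21, hv22⟩ := A.assoc s u (A.compl x) w v hw
      (by rw [A.comm]; exact hv1)
    rw [A.comm] at hv21
    rw [hr] at hv21
    have : v2 = r := by injection hv21 with h; exact h.symm
    rw [this] at hv22
    have := A.my_le_compl hv22
    rwa [A.my_compl_compl] at this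
  refine ⟨main, ?_⟩
  intro p q r hpq hp hq
  have hp' : A.le p (A.compl (A.compl x)) := by rwa [A.my_compl_compl]
  obtain ⟨w, hw⟩ := A.my_orth_of_le_compl hp'
  exact (main p q r w hp hq hpq hw).2
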